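/- arXiv:1212.1365 — 4 statements merged into one kernel-verified Lean document; each statement's English description precedes it below -/
import Mathlib

section
/- Let ε₁, ε₂, σ be real numbers, and define the 4×4 matrix B = E(k₁)⊗I + I⊗E(k₂) + σ²·(a⊗a), where E(kⱼ) = [[0,1],[-εⱼ²,0]] and a = [[0,0],[1,0]]. Set C = 2·E(k₁)⊗E(k₂) + σ²·(I⊗a + a⊗I). Then B² = -(ε₁²+ε₂²)·I₄ + C and C² = 4ε₁²ε₂²·I₄ + 2σ²·B. -/
/-!
`E(k)` squares to `-ε²`, `a` squares to `0`, and `E(k)` and `a` anticommute up to the identity: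
`E(k) a + a E(k) = I`. These three relations alone determine the squares of `B` and `C`, via the
mixed-product rule `(A ⊗ B)(A' ⊗ B') = AA' ⊗ BB'`.
-/

open Matrix Kronecker

namespace Matrix

section Kronecker

variable {R l m n p : Type*} [Ring R]

theorem sub_kronecker (A₁ A₂ : Matrix l m R) (B : Matrix n p R) :
    (A₁ - A₂) ⊗ₖ B = A₁ ⊗ₖ B - A₂ ⊗ₖ B := by
  ext; simp [sub_mul]

theorem kronecker_sub (A : Matrix l m R) (B₁ B₂ : Matrix n p R) :
    A ⊗ₖ (B₁ - B₂) = A ⊗ₖ B₁ - A ⊗ₖ B₂ := by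
  ext; simp [mul_sub]

end Kronecker

section KronPair

variable {R n : Type*} [CommRing R] [Fintype n] [DecidableEq n]

def kronPairB (E₁ E₂ a : Matrix n n R) (s : R) : Matrix (n × n) (n × n) R :=
  E₁ ⊗ₖ 1 + 1 ⊗ₖ E₂ + s • (a ⊗ₖ a)

def kronPairC (E₁ E₂ a : Matrix n n R) (s : R) : Matrix (n × n) (n × n) R :=
  (2 : R) • (E₁ ⊗ₖ E₂) + s • (1 ⊗ₖ a + a ⊗ₖ 1)

variable {E₁ E₂ a : Matrix n n R} {c₁ c₂ : R}

theorem kronPairB_mul_self (hE₁ : E₁ * E₁ = -c₁ • 1) (hE₂ : E₂ * E₂ = -c₂ • 1) (ha : a * a = 0)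
    (hE₁a : E₁ * a + a * E₁ = 1) (hE₂a : E₂ * a + a * E₂ = 1) (s : R) :
    kronPairB E₁ E₂ a s * kronPairB E₁ E₂ a s = -(c₁ + c₂) • 1 + kronPairC E₁ E₂ a s := by
  simp only [kronPairB, kronPairC, add_mul, mul_add, smul_mul_assoc, mul_smul_comm,
    ← mul_kronecker_mul, Matrix.mul_one, Matrix.one_mul, hE₁, hE₂, ha, eq_sub_of_add_eq' hE₁a,
    eq_sub_of_add_eq' hE₂a, sub_kronecker, kronecker_sub, smul_kronecker, kronecker_smul,
    kronecker_zero, one_kronecker_one]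
  module

theorem kronPairC_mul_self (hE₁ : E₁ * E₁ = -c₁ • 1) (hE₂ : E₂ * E₂ = -c₂ • 1) (ha : a * a = 0)
    (hE₁a : E₁ * a + a * E₁ = 1) (hE₂a : E₂ * a + a * E₂ = 1) (s : R) :
    kronPairC E₁ E₂ a s * kronPairC E₁ E₂ a s = (4 * c₁ * c₂) • 1 + (2 * s) • kronPairB E₁ E₂ a s := by
  simp only [kronPairB, kronPairC, add_mul, mul_add, smul_mul_assoc, mul_smul_comm,
    ← mul_kronecker_mul, Matrix.mul_one, Matrix.one_mul, hE₁, hE₂, ha, eq_sub_of_add_eq' hE₁a,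
    eq_sub_of_add_eq' hE₂a, sub_kronecker, kronecker_sub, smul_kronecker, kronecker_smul,
    kronecker_zero, zero_kronecker, one_kronecker_one]
  module

end KronPair

section TwoByTwo

variable {R : Type*} [CommRing R]

theorem companion_mul_self (c : R) :
    !![0, 1; -c, 0] * !![0, 1; -c, 0] = -c • (1 : Matrix (Fin 2) (Fin 2) R) := by
  ext i j; fin_cases i <;> fin_cases j <;> simp

theorem lowerShift_mul_self : !![0, 0; 1, 0] * !![0, 0; 1, 0] = (0 : Matrix (Fin 2) (Fin 2) R) := by
  ext i j; fin_cases i <;> fin_cases j <;> simp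

theorem companion_mul_lowerShift_add (c : R) :
    !![0, 1; -c, 0] * !![0, 0; 1, 0] + !![0, 0; 1, 0] * !![0, 1; -c, 0] =
      (1 : Matrix (Fin 2) (Fin 2) R) := by
  ext i j; fin_cases i <;> fin_cases j <;> simp

end TwoByTwo

end Matrix

/-- With `B = E(k₁)⊗I + I⊗E(k₂) + σ²(a⊗a)` and
`C = 2 E(k₁)⊗E(k₂) + σ²(I⊗a + a⊗I)` one has
`B² = -(ε₁²+ε₂²)·I₄ + C` and `C² = 4ε₁²ε₂²·I₄ + 2σ²·B`. -/
theorem stmt4 (ε₁ ε₂ σ : ℝ)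
    (E₁ E₂ a : Matrix (Fin 2) (Fin 2) ℂ)
    (hE₁ : E₁ = !![0, 1; -(ε₁ : ℂ) ^ 2, 0])
    (hE₂ : E₂ = !![0, 1; -(ε₂ : ℂ) ^ 2, 0])
    (ha : a = !![0, 0; 1, 0])
    (B C : Matrix (Fin 2 × Fin 2) (Fin 2 × Fin 2) ℂ)
    (hB : B = E₁ ⊗ₖ (1 : Matrix (Fin 2) (Fin 2) ℂ) + (1 : Matrix (Fin 2) (Fin 2) ℂ) ⊗ₖ E₂
        + ((σ : ℂ) ^ 2) • (a ⊗ₖ a))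
    (hC : C = (2 : ℂ) • (E₁ ⊗ₖ E₂)
        + ((σ : ℂ) ^ 2) • ((1 : Matrix (Fin 2) (Fin 2) ℂ) ⊗ₖ a + a ⊗ₖ (1 : Matrix (Fin 2) (Fin 2) ℂ))) :
    B * B = (-((ε₁ : ℂ) ^ 2 + (ε₂ : ℂ) ^ 2)) • (1 : Matrix (Fin 2 × Fin 2) (Fin 2 × Fin 2) ℂ) + C ∧
    C * C = (4 * (ε₁ : ℂ) ^ 2 * (ε₂ : ℂ) ^ 2) • (1 : Matrix (Fin 2 × Fin 2) (Fin 2 × Fin 2) ℂ)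
        + (2 * (σ : ℂ) ^ 2) • B := by
  subst hE₁ hE₂ ha hB hC
  have h₁ := companion_mul_self ((ε₁ : ℂ) ^ 2)
  have h₂ := companion_mul_self ((ε₂ : ℂ) ^ 2)
  have h₁a := companion_mul_lowerShift_add ((ε₁ : ℂ) ^ 2)
  have h₂a := companion_mul_lowerShift_add ((ε₂ : ℂ) ^ 2)
  exact ⟨kronPairB_mul_self h₁ h₂ lowerShift_mul_self h₁a h₂a _,
    kronPairC_mul_self h₁ h₂ lowerShift_mul_self h₁a h₂a _⟩
end

section
/- Let ε₁, ε₂, σ be real and B = E(k₁)⊗I + I⊗E(k₂) + σ²·(a⊗a) as above. If v is a nonzero vector with B v = iω v for a complex number ω, then 4ε₁²ε₂² + 2iωσ² = (ε₁² + ε₂² - ω²)². -/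
/-!
An eigenvalue `μ` of `B` is a root of its characteristic polynomial, which for this coupled
Kronecker sum is `(μ² + ε₁² + ε₂²)² - 4ε₁²ε₂² - 2σ²μ`; at `μ = iω`, where `μ² = -ω²`,
its vanishing is the dispersion relation.
-/

open Matrix Kronecker

theorem det_smul_one_sub_eq_zero_of_mulVec_eq_smul {n R : Type*} [Fintype n] [DecidableEq n]
    [CommRing R] [IsDomain R] {M : Matrix n n R} {μ : R} {v : n → R}
    (hv : v ≠ 0) (h : M *ᵥ v = μ • v) : (μ • 1 - M).det = 0 :=
  exists_mulVec_eq_zero_iff.mp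
    ⟨v, hv, by rw [sub_mulVec, smul_mulVec, one_mulVec, h, sub_self]⟩

theorem det_smul_one_sub_kroneckerSum_add_coupling {R : Type*} [CommRing R] (e₁ e₂ s μ : R) :
    (μ • (1 : Matrix (Fin 2 × Fin 2) (Fin 2 × Fin 2) R)
      - (!![0, 1; -e₁, 0] ⊗ₖ (1 : Matrix (Fin 2) (Fin 2) R)
        + (1 : Matrix (Fin 2) (Fin 2) R) ⊗ₖ !![0, 1; -e₂, 0]
        + s • (!![0, 0; 1, 0] ⊗ₖ !![0, 0; 1, 0]))).det
      = (μ ^ 2 + e₁ + e₂) ^ 2 - 4 * e₁ * e₂ - 2 * s * μ := by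
  rw [← det_reindex_self finProdFinEquiv]
  simp [det_succ_row_zero, Fin.sum_univ_succ, finProdFinEquiv, one_apply, Fin.succAbove,
    Fin.divNat, Fin.modNat]
  ring

/-- Dispersion relation (apend17): if `B v = iω v` for a nonzero `v`, where
`B = E(k₁)⊗I + I⊗E(k₂) + σ²(a⊗a)`, then `4ε₁²ε₂² + 2iωσ² = (ε₁²+ε₂²-ω²)²`. -/
theorem stmt5 (ε₁ ε₂ σ : ℝ) (ω : ℂ)
    (E₁ E₂ a : Matrix (Fin 2) (Fin 2) ℂ)
    (hE₁ : E₁ = !![0, 1; -(ε₁ : ℂ) ^ 2, 0])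
    (hE₂ : E₂ = !![0, 1; -(ε₂ : ℂ) ^ 2, 0])
    (ha : a = !![0, 0; 1, 0])
    (B : Matrix (Fin 2 × Fin 2) (Fin 2 × Fin 2) ℂ)
    (hB : B = E₁ ⊗ₖ (1 : Matrix (Fin 2) (Fin 2) ℂ) + (1 : Matrix (Fin 2) (Fin 2) ℂ) ⊗ₖ E₂
        + ((σ : ℂ) ^ 2) • (a ⊗ₖ a))
    (v : Fin 2 × Fin 2 → ℂ) (hv : v ≠ 0)
    (heig : B.mulVec v = (Complex.I * ω) • v) :
    4 * (ε₁ : ℂ) ^ 2 * (ε₂ : ℂ) ^ 2 + 2 * Complex.I * ω * (σ : ℂ) ^ 2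
      = ((ε₁ : ℂ) ^ 2 + (ε₂ : ℂ) ^ 2 - ω ^ 2) ^ 2 := by
  have hdet := det_smul_one_sub_eq_zero_of_mulVec_eq_smul hv heig
  rw [hB, hE₁, hE₂, ha, det_smul_one_sub_kroneckerSum_add_coupling, mul_pow, Complex.I_sq] at hdet
  linear_combination -hdet
end

section
/- Let ε₁, ε₂ ≥ 0 and σ > 0, and consider P(λ) = λ⁴ + 2λ²(ε₁²+ε₂²) + (ε₁²-ε₂²)² - 2λσ². If ε₁ = ε₂ then P has a (real) root λ > 0. More generally, if |ε₁² - ε₂²| is sufficiently small (depending on ε₁²+ε₂² and σ), then P has a root λ > 0. -/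
/-!
Since `P(λ) = λ (λ³ + 2λs - 2σ²) + d²`, the unperturbed quartic `P₀` (`d = 0`) is negative at some
small `λ₀ > 0`; so is `P` as long as `d² < -P₀(λ₀)`, and as `P(λ) ≥ 0` for large `λ`, the
intermediate value theorem gives a root beyond `λ₀`.
-/

open Filter Topology

/-- `P(λ)` written with `s = ε₁² + ε₂²` and `d = ε₁² - ε₂²`. -/
def stabilityQuartic (s d σ l : ℝ) : ℝ := l ^ 4 + 2 * l ^ 2 * s + d ^ 2 - 2 * l * σ ^ 2

lemma continuous_stabilityQuartic (s d σ : ℝ) : Continuous (stabilityQuartic s d σ) := by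
  unfold stabilityQuartic
  fun_prop

lemma stabilityQuartic_eq_add_sq (s d σ l : ℝ) :
    stabilityQuartic s d σ l = stabilityQuartic s 0 σ l + d ^ 2 := by
  unfold stabilityQuartic
  ring

lemma stabilityQuartic_nonneg {s d σ l : ℝ} (hs : 0 ≤ s) (hl : 1 ≤ l) (hlσ : 2 * σ ^ 2 ≤ l) :
    0 ≤ stabilityQuartic s d σ l := by
  have hl4 : 2 * l * σ ^ 2 ≤ l ^ 4 := by nlinarith [pow_le_pow_left₀ zero_le_one hl 2]
  unfold stabilityQuartic
  nlinarith [sq_nonneg d, sq_nonneg l]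

lemma exists_pos_stabilityQuartic_zero_neg (s : ℝ) {σ : ℝ} (hσ : σ ≠ 0) :
    ∃ l, 0 < l ∧ stabilityQuartic s 0 σ l < 0 := by
  let g : ℝ → ℝ := fun l => l ^ 3 + 2 * l * s - 2 * σ ^ 2
  have hg : ∀ᶠ l in 𝓝 0, g l < 0 :=
    (show Continuous g by fun_prop).continuousAt.eventually_lt continuousAt_const
      (by simpa [g] using pow_pos (sq_pos_of_ne_zero hσ) 1)
  obtain ⟨l, hgl, hl⟩ := (hg.filter_mono nhdsWithin_le_nhds |>.and self_mem_nhdsWithin).exists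
    (f := 𝓝[>] (0 : ℝ))
  refine ⟨l, hl, ?_⟩
  have hfactor : stabilityQuartic s 0 σ l = l * g l := by
    simp only [stabilityQuartic, g]
    ring
  rw [hfactor]
  exact mul_neg_of_pos_of_neg hl hgl

lemma exists_pos_root_of_neg {s d σ l₀ : ℝ} (hs : 0 ≤ s) (hl₀ : 0 < l₀)
    (hneg : stabilityQuartic s d σ l₀ < 0) :
    ∃ l, 0 < l ∧ stabilityQuartic s d σ l = 0 := by
  set L := max l₀ (max 1 (2 * σ ^ 2))
  have hL : 0 ≤ stabilityQuartic s d σ L :=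
    stabilityQuartic_nonneg hs (le_max_of_le_right (le_max_left _ _))
      (le_max_of_le_right (le_max_right _ _))
  obtain ⟨l, hl, hroot⟩ := intermediate_value_Icc (le_max_left l₀ _)
    (continuous_stabilityQuartic s d σ).continuousOn ⟨hneg.le, hL⟩
  exact ⟨l, hl₀.trans_le hl.1, hroot⟩

lemma exists_pos_root_of_abs_lt {s σ : ℝ} (hs : 0 ≤ s) (hσ : σ ≠ 0) :
    ∃ δ, 0 < δ ∧ ∀ d, |d| < δ → ∃ l, 0 < l ∧ stabilityQuartic s d σ l = 0 := by
  obtain ⟨l₀, hl₀, hneg⟩ := exists_pos_stabilityQuartic_zero_neg s hσ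
  refine ⟨√(-stabilityQuartic s 0 σ l₀), Real.sqrt_pos.2 (neg_pos.2 hneg), fun d hd => ?_⟩
  have hd2 : d ^ 2 < -stabilityQuartic s 0 σ l₀ := by
    rw [← sq_abs]
    exact (Real.lt_sqrt (abs_nonneg d)).1 hd
  refine exists_pos_root_of_neg hs hl₀ ?_
  rw [stabilityQuartic_eq_add_sq]
  linarith

/-- Destabilization for complete spatial correlations: with
`P(l) = l⁴ + 2l²(ε₁²+ε₂²) + (ε₁²-ε₂²)² - 2lσ²` and `σ > 0`:
if `ε₁ = ε₂` then `P` has a positive real root, and more generally for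
each value `s = ε₁²+ε₂²` there is `δ > 0` such that whenever
`|ε₁² - ε₂²| < δ` (with `ε₁²+ε₂² = s`), `P` has a positive real root. -/
theorem stmt7 (σ : ℝ) (hσ : 0 < σ) :
    (∀ ε₁ ε₂ : ℝ, 0 ≤ ε₁ → 0 ≤ ε₂ → ε₁ = ε₂ →
      ∃ l : ℝ, 0 < l ∧
        l ^ 4 + 2 * l ^ 2 * (ε₁ ^ 2 + ε₂ ^ 2) + (ε₁ ^ 2 - ε₂ ^ 2) ^ 2 - 2 * l * σ ^ 2 = 0) ∧
    (∀ s : ℝ, 0 ≤ s → ∃ δ : ℝ, 0 < δ ∧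
      ∀ ε₁ ε₂ : ℝ, 0 ≤ ε₁ → 0 ≤ ε₂ → ε₁ ^ 2 + ε₂ ^ 2 = s → |ε₁ ^ 2 - ε₂ ^ 2| < δ →
        ∃ l : ℝ, 0 < l ∧
          l ^ 4 + 2 * l ^ 2 * (ε₁ ^ 2 + ε₂ ^ 2) + (ε₁ ^ 2 - ε₂ ^ 2) ^ 2 - 2 * l * σ ^ 2 = 0) := by
  refine ⟨fun ε₁ ε₂ _ _ heq => ?_, fun s hs => ?_⟩
  · obtain ⟨δ, hδ, hroot⟩ := exists_pos_root_of_abs_lt (s := ε₁ ^ 2 + ε₂ ^ 2) (by positivity) hσ.ne'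
    exact hroot _ (by simpa [heq] using hδ)
  · obtain ⟨δ, hδ, hroot⟩ := exists_pos_root_of_abs_lt hs hσ.ne'
    refine ⟨δ, hδ, fun ε₁ ε₂ _ _ hsum hd => ?_⟩
    subst hsum
    exact hroot _ hd
end

section
/- Let m > 0, σ > 0 and let λ(σ) be the unique positive root of λ³ + 4λm² = 2σ². Then λ(σ) = σ²/(2m²) + O(σ⁶) as σ → 0; precisely, |λ(σ) - σ²/(2m²)| ≤ C·σ⁶ for small σ and some constant C depending on m. -/
/-- Small-noise asymptotics of the positive root of `l³ + 4lm² = 2σ²`: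
`λ(σ) = σ²/(2m²) + O(σ⁶)` as `σ → 0`. -/
theorem stmt10 (m : ℝ) (hm : 0 < m) (lam : ℝ → ℝ)
    (hlam : ∀ σ : ℝ, 0 < σ →
      0 < lam σ ∧ (lam σ) ^ 3 + 4 * (lam σ) * m ^ 2 = 2 * σ ^ 2) :
    ∃ C δ : ℝ, 0 < C ∧ 0 < δ ∧
      ∀ σ : ℝ, 0 < σ → σ < δ → |lam σ - σ ^ 2 / (2 * m ^ 2)| ≤ C * σ ^ 6 := by
  have hm2 : (0:ℝ) < m ^ 2 := by positivity
  refine ⟨1 / (32 * m ^ 8), 1, by positivity, one_pos, ?_⟩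
  intro σ hσ _
  obtain ⟨hpos, heq⟩ := hlam σ hσ
  set l := lam σ with hl
  have hlt : l < σ ^ 2 / (2 * m ^ 2) := by
    rw [lt_div_iff₀ (by positivity)]
    nlinarith [pow_pos hpos 3]
  have hdiff : l - σ ^ 2 / (2 * m ^ 2) = -(l ^ 3 / (4 * m ^ 2)) := by
    field_simp
    nlinarith
  rw [hdiff, abs_neg, abs_of_nonneg (by positivity)]
  have hcube : l ^ 3 ≤ (σ ^ 2 / (2 * m ^ 2)) ^ 3 :=
    pow_le_pow_left₀ hpos.le hlt.le 3
  calc l ^ 3 / (4 * m ^ 2) ≤ (σ ^ 2 / (2 * m ^ 2)) ^ 3 / (4 * m ^ 2) := by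
        apply div_le_div_of_nonneg_right hcube (by positivity) |>.trans_eq rfl
      _ = 1 / (32 * m ^ 8) * σ ^ 6 := by ring
end
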